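/- arXiv:1603.00166 — 2 statements merged into one kernel-verified Lean document; each statement's English description precedes it below -/
import Mathlib

section
/- Let n ≥ 1, let a > 0, and let f : ℝⁿ → ℝ be smooth and convex (⟨Hess f(x) v, v⟩ ≥ 0 for all x, v ∈ ℝⁿ, i.e. Ric_f ≥ 0 in the Euclidean setting). Then there is no smooth positive ancient solution u : ℝⁿ × (−∞, 0] → ℝ to the nonlinear f-heat equation ∂u/∂t = Δ_f u + a·u·ln u satisfying 0 < u(x,t) ≤ e^{−2} for all (x,t). (This is the Euclidean-space case of the paper's Theorem 1.2(i).) -/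
open Metric Set Filter
open scoped RealInnerProductSpace Topology

noncomputable section

/-- Euclidean Laplacian on `EuclideanSpace ℝ (Fin n)`. -/
def eLap {n : ℕ} (u : EuclideanSpace ℝ (Fin n) → ℝ) (x : EuclideanSpace ℝ (Fin n)) : ℝ :=
  ∑ i : Fin n,
    fderiv ℝ (fun y => fderiv ℝ u y (EuclideanSpace.single i 1)) x (EuclideanSpace.single i 1)

/-- Weighted (drift) Laplacian `Δ_f u = Δu − ⟨∇f, ∇u⟩`. -/
def fLap {n : ℕ} (f u : EuclideanSpace ℝ (Fin n) → ℝ) (x : EuclideanSpace ℝ (Fin n)) : ℝ :=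
  eLap u x - ⟪gradient f x, gradient u x⟫

/-- Hessian quadratic form of `f` at `x` evaluated at `(v, v)`. -/
def hessQF {n : ℕ} (f : EuclideanSpace ℝ (Fin n) → ℝ) (x v : EuclideanSpace ℝ (Fin n)) : ℝ :=
  fderiv ℝ (fun y => fderiv ℝ f y v) x v

/-- The constant `α = max_{|x−x₀|=1} ((n−1) − ⟨∇f(x), x−x₀⟩)`. -/
def alphaC {n : ℕ} (f : EuclideanSpace ℝ (Fin n) → ℝ) (x₀ : EuclideanSpace ℝ (Fin n)) : ℝ :=
  sSup ((fun y => (n : ℝ) - 1 - ⟪gradient f y, y - x₀⟫) '' sphere x₀ 1)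


section IP
variable {F : Type*} [NormedAddCommGroup F] [InnerProductSpace ℝ F] [CompleteSpace F]

lemma inner_gradient_eq (g : F → ℝ) (x y : F) :
    ⟪gradient g x, y⟫ = fderiv ℝ g x y := by
  rw [gradient, InnerProductSpace.toDual_symm_apply]

/-- Right-endpoint first-derivative test. -/
lemma deriv_nonneg_right {φ : ℝ → ℝ} {L t₀ t₁ : ℝ} (h : t₀ < t₁)
    (hd : HasDerivAt φ L t₁) (hm : ∀ t ∈ Icc t₀ t₁, φ t ≤ φ t₁) : 0 ≤ L := by
  have hslope : Tendsto (slope φ t₁) (𝓝[Ioo t₀ t₁] t₁) (𝓝 L) :=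
    (hasDerivAt_iff_tendsto_slope.1 hd).mono_left
      (nhdsWithin_mono _ (fun y hy => ne_of_lt hy.2))
  have hne : (𝓝[Ioo t₀ t₁] t₁).NeBot := right_nhdsWithin_Ioo_neBot h
  refine ge_of_tendsto hslope ?_
  filter_upwards [self_mem_nhdsWithin] with t ht
  have h1 : φ t - φ t₁ ≤ 0 := sub_nonpos.2 (hm t ⟨le_of_lt ht.1, le_of_lt ht.2⟩)
  have h2 : t - t₁ < 0 := sub_neg.2 ht.2
  rw [slope_def_field]
  exact div_nonneg_of_nonpos h1 h2.le

/-- Second-derivative test at a local max. -/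
lemma second_deriv_nonpos {φ φ' : ℝ → ℝ} {L : ℝ}
    (hd : ∀ s, HasDerivAt φ (φ' s) s) (hd' : HasDerivAt φ' L 0)
    (hm : IsLocalMax φ 0) : L ≤ 0 := by
  by_contra hL
  push_neg at hL
  have h0 : φ' 0 = 0 := by
    have := hm.deriv_eq_zero
    rwa [(hd 0).deriv] at this
  have hslope : Tendsto (slope φ' 0) (𝓝[≠] 0) (𝓝 L) := hasDerivAt_iff_tendsto_slope.1 hd'
  have hev : ∀ᶠ s in 𝓝[≠] (0:ℝ), L/2 < slope φ' 0 s :=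
    hslope.eventually (eventually_gt_nhds (by linarith))
  rw [eventually_nhdsWithin_iff] at hev
  rw [Metric.eventually_nhds_iff] at hev
  obtain ⟨δ₁, hδ₁, hev⟩ := hev
  have hm' := hm
  rw [IsLocalMax, IsMaxFilter, Metric.eventually_nhds_iff] at hm'
  obtain ⟨δ₂, hδ₂, hmax⟩ := hm'
  set s₀ := min δ₁ δ₂ / 2 with hs₀
  have hs₀pos : 0 < s₀ := by positivity
  have hpos : ∀ t ∈ Ioo (0:ℝ) s₀, 0 < φ' t := by
    intro t ht
    have hts : dist t 0 < δ₁ := by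
      rw [Real.dist_eq, sub_zero, abs_of_pos ht.1]
      have : s₀ ≤ δ₁ / 2 := by
        rw [hs₀]; gcongr; exact min_le_left _ _
      linarith [ht.2]
    have := hev hts (mem_compl_singleton_iff.2 (ne_of_gt ht.1))
    rw [slope_def_field, h0, sub_zero, sub_zero] at this
    have h4 : 0 < φ' t / t := lt_trans (by linarith) this
    rcases div_pos_iff.1 h4 with ⟨h5, _⟩ | ⟨_, h6⟩
    · exact h5
    · linarith [ht.1]
  obtain ⟨c, hc, hceq⟩ := exists_hasDerivAt_eq_slope φ φ' hs₀pos
    (fun t _ => (hd t).continuousAt.continuousWithinAt) (fun t _ => hd t)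
  have hφ : φ 0 < φ s₀ := by
    have hcpos : 0 < φ' c := hpos c hc
    rw [hceq] at hcpos
    have := div_pos_iff.1 (by rwa [sub_zero] at hcpos)
    rcases this with ⟨h1, _⟩ | ⟨_, h2⟩
    · linarith
    · linarith
  have : φ s₀ ≤ φ 0 := by
    apply hmax
    rw [Real.dist_eq, sub_zero, abs_of_pos hs₀pos]
    have : s₀ ≤ δ₂ / 2 := by rw [hs₀]; gcongr; exact min_le_right _ _
    linarith
  linarith

end IP

variable {F : Type*} [NormedAddCommGroup F] [NormedSpace ℝ F]

lemma contDiff_hess {g : F → ℝ} (hg : ContDiff ℝ (⊤ : ℕ∞) g) (v : F) :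
    ContDiff ℝ (⊤ : ℕ∞) (fun y => fderiv ℝ g y v) :=
  (hg.fderiv_right (le_refl _)).clm_apply contDiff_const

lemma hess_nonpos_of_isLocalMax {g : F → ℝ} (hg : ContDiff ℝ (⊤ : ℕ∞) g) {x : F}
    (hx : IsLocalMax g x) (v : F) :
    fderiv ℝ (fun y => fderiv ℝ g y v) x v ≤ 0 := by
  set D : F → ℝ := fun y => fderiv ℝ g y v with hD
  have hDc : ContDiff ℝ (⊤ : ℕ∞) D := contDiff_hess hg v
  have hline : ∀ s : ℝ, HasDerivAt (fun s : ℝ => x + s • v) v s := by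
    intro s
    simpa using ((hasDerivAt_id s).smul_const v).const_add x
  have hφ : ∀ s : ℝ, HasDerivAt (fun s : ℝ => g (x + s • v)) (D (x + s • v)) s := by
    intro s
    have h1 := (hg.differentiable (by simp) (x + s • v)).hasFDerivAt
    exact h1.comp_hasDerivAt s (hline s)
  have hφ' : HasDerivAt (fun s : ℝ => D (x + s • v)) (fderiv ℝ D x v) 0 := by
    have h1 := (hDc.differentiable (by simp) (x + (0:ℝ) • v)).hasFDerivAt
    have h2 := h1.comp_hasDerivAt 0 (hline 0)
    simp at h2; exact h2
  have hmax : IsLocalMax (fun s : ℝ => g (x + s • v)) 0 := by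
    have hcont : ContinuousAt (fun s : ℝ => x + s • v) 0 :=
      (continuous_const.add (continuous_id.smul continuous_const)).continuousAt
    have : (fun s : ℝ => x + s • v) 0 = x := by simp
    have h2 : Tendsto (fun s : ℝ => x + s • v) (𝓝 0) (𝓝 x) := by
      have := hcont.tendsto
      simpa using this
    have h3 := h2.eventually hx
    filter_upwards [h3] with s hs
    simpa using hs
  exact second_deriv_nonpos hφ hφ' hmax

section Helpers

local notation "ES" n => EuclideanSpace ℝ (Fin n)

variable {n : ℕ}

lemma hasFDerivAt_bexp (c μ : ℝ) (x : ES n) :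
    HasFDerivAt (fun y : ES n => c * Real.exp (μ * ‖y‖^2))
      ((c * Real.exp (μ * ‖x‖^2) * (2*μ)) • innerSL ℝ x) x := by
  have h1 : HasFDerivAt (fun y : ES n => ‖y‖^2) (2 • innerSL ℝ x) x :=
    (hasStrictFDerivAt_norm_sq x).hasFDerivAt
  have h2 := ((h1.const_mul μ).exp).const_mul c
  refine h2.congr_fderiv ?_
  ext v
  simp only [ContinuousLinearMap.smul_apply, innerSL_apply_apply, smul_eq_mul, nsmul_eq_mul]
  ring

lemma fderiv_bexp (c μ : ℝ) (x v : ES n) :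
    fderiv ℝ (fun y : ES n => c * Real.exp (μ * ‖y‖^2)) x v
      = c * Real.exp (μ * ‖x‖^2) * (2*μ) * ⟪x, v⟫ := by
  rw [(hasFDerivAt_bexp c μ x).fderiv]
  simp only [ContinuousLinearMap.smul_apply, innerSL_apply_apply, smul_eq_mul]

lemma fderiv_fderiv_bexp (c μ : ℝ) (x v : ES n) :
    fderiv ℝ (fun y => fderiv ℝ (fun z : ES n => c * Real.exp (μ * ‖z‖^2)) y v) x v
      = c * Real.exp (μ * ‖x‖^2) * (2*μ) * ((2*μ) * ⟪x, v⟫^2 + ‖v‖^2) := by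
  have hfun : (fun y => fderiv ℝ (fun z : ES n => c * Real.exp (μ * ‖z‖^2)) y v)
      = fun y : ES n => (c * (2*μ)) * (Real.exp (μ * ‖y‖^2) * ⟪y, v⟫) := by
    funext y
    rw [fderiv_bexp]
    ring
  rw [hfun]
  have hexp : HasFDerivAt (fun y : ES n => Real.exp (μ * ‖y‖^2))
      (Real.exp (μ * ‖x‖^2) • (μ • (2 • innerSL ℝ x))) x :=
    (((hasStrictFDerivAt_norm_sq x).hasFDerivAt).const_mul μ).exp
  have hlin : HasFDerivAt (fun y : ES n => ⟪y, v⟫) (innerSL ℝ v) x := by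
    have : (fun y : ES n => ⟪y, v⟫) = fun y : ES n => (innerSL ℝ v) y := by
      funext y; rw [innerSL_apply_apply]; exact real_inner_comm v y
    rw [this]
    exact (innerSL ℝ v).hasFDerivAt
  have hmul : HasFDerivAt (fun y : ES n => (c * (2*μ)) * (Real.exp (μ * ‖y‖^2) * ⟪y, v⟫)) _ x :=
    (hexp.mul hlin).const_mul (c * (2*μ))
  rw [hmul.fderiv]
  simp only [ContinuousLinearMap.smul_apply, ContinuousLinearMap.add_apply,
    innerSL_apply_apply, smul_eq_mul]
  rw [real_inner_self_eq_norm_sq]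
  ring

lemma sum_coord_sq (x : ES n) : ∑ i : Fin n, (x i)^2 = ‖x‖^2 := by
  rw [EuclideanSpace.norm_eq, Real.sq_sqrt (by positivity)]
  simp [Real.norm_eq_abs, sq_abs]

lemma eLap_bexp (c μ : ℝ) (x : ES n) :
    eLap (fun y : ES n => c * Real.exp (μ * ‖y‖^2)) x
      = c * Real.exp (μ * ‖x‖^2) * ((2*μ) * ((2*μ) * ‖x‖^2 + n)) := by
  rw [eLap]
  have hterm : ∀ i : Fin n,
      fderiv ℝ (fun y => fderiv ℝ (fun z : ES n => c * Real.exp (μ * ‖z‖^2)) y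
          (EuclideanSpace.single i 1)) x (EuclideanSpace.single i 1)
        = c * Real.exp (μ * ‖x‖^2) * (2*μ) * ((2*μ) * (x i)^2 + 1) := by
    intro i
    rw [fderiv_fderiv_bexp]
    have h1 : ⟪x, EuclideanSpace.single i (1:ℝ)⟫ = x i := by
      rw [EuclideanSpace.inner_single_right]; simp
    have h2 : ‖EuclideanSpace.single i (1:ℝ)‖ = 1 := by
      rw [EuclideanSpace.norm_single]; norm_num
    rw [h1, h2]
    norm_num
  rw [Finset.sum_congr rfl (fun i _ => hterm i)]
  rw [← Finset.mul_sum]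
  have : ∑ i : Fin n, ((2*μ) * (x i)^2 + 1) = (2*μ) * ‖x‖^2 + n := by
    rw [Finset.sum_add_distrib, ← Finset.mul_sum, sum_coord_sq]
    simp
  rw [this]
  ring

lemma eLap_const_add (K : ℝ) (b : (ES n) → ℝ) (x : ES n) :
    eLap (fun y => K + b y) x = eLap b x := by
  rw [eLap, eLap]
  apply Finset.sum_congr rfl
  intro i _
  have : (fun y => fderiv ℝ (fun z => K + b z) y (EuclideanSpace.single i 1))
      = fun y => fderiv ℝ b y (EuclideanSpace.single i 1) := by
    funext y
    rw [fderiv_const_add]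
  rw [this]

end Helpers


section Helpers2

local notation "ES" n => EuclideanSpace ℝ (Fin n)

variable {n : ℕ}

lemma fderiv_self_lower {f : (ES n) → ℝ} (hf : ContDiff ℝ (⊤ : ℕ∞) f)
    (hconv : ∀ x v : ES n, 0 ≤ hessQF f x v) (x : ES n) :
    fderiv ℝ f 0 x ≤ fderiv ℝ f x x := by
  set g : ℝ → ℝ := fun s => fderiv ℝ f (s • x) x with hg
  have hline : ∀ s : ℝ, HasDerivAt (fun s : ℝ => s • x) x s := by
    intro s
    simpa using (hasDerivAt_id s).smul_const x
  have hgd : ∀ s : ℝ, HasDerivAt g (hessQF f (s • x) x) s := by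
    intro s
    have hD := (contDiff_hess hf x).differentiable (by simp) (s • x)
    exact hD.hasFDerivAt.comp_hasDerivAt s (hline s)
  have hmono : MonotoneOn g (Icc (0:ℝ) 1) := by
    apply monotoneOn_of_deriv_nonneg (convex_Icc 0 1)
    · exact fun t _ => ((hgd t).differentiableAt).continuousAt.continuousWithinAt
    · exact fun t _ => ((hgd t).differentiableAt).differentiableWithinAt
    · intro t _
      rw [(hgd t).deriv]
      exact hconv _ _
  have h01 := hmono (by simp : (0:ℝ) ∈ Icc (0:ℝ) 1) (by simp : (1:ℝ) ∈ Icc (0:ℝ) 1) zero_le_one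
  simpa [hg] using h01

lemma inner_gradf_lower {f : (ES n) → ℝ} (hf : ContDiff ℝ (⊤ : ℕ∞) f)
    (hconv : ∀ x v : ES n, 0 ≤ hessQF f x v) (x : ES n) :
    -(‖gradient f 0‖ * ‖x‖) ≤ fderiv ℝ f x x := by
  refine le_trans ?_ (fderiv_self_lower hf hconv x)
  rw [← inner_gradient_eq]
  have := abs_real_inner_le_norm (gradient f 0) x
  have h2 := neg_abs_le (⟪gradient f 0, x⟫)
  linarith

lemma slice_contDiff {u : (ES n) → ℝ → ℝ}
    (h : ContDiffOn ℝ (⊤ : ℕ∞) (fun p : (ES n) × ℝ => u p.1 p.2) (univ ×ˢ Iic (0:ℝ)))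
    {t : ℝ} (ht : t ≤ 0) : ContDiff ℝ (⊤ : ℕ∞) (fun x : ES n => u x t) := by
  rw [← contDiffOn_univ]
  have hmap : MapsTo (fun x : ES n => (x, t)) univ (univ ×ˢ Iic (0:ℝ)) :=
    fun x _ => ⟨trivial, ht⟩
  exact h.comp ((contDiff_id.prodMk contDiff_const).contDiffOn) hmap

lemma time_differentiable {u : (ES n) → ℝ → ℝ}
    (h : ContDiffOn ℝ (⊤ : ℕ∞) (fun p : (ES n) × ℝ => u p.1 p.2) (univ ×ˢ Iic (0:ℝ)))
    {x : ES n} {t : ℝ} (ht : t < 0) : DifferentiableAt ℝ (fun s => u x s) t := by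
  have hopen : IsOpen ((univ : Set (ES n)) ×ˢ Iio (0:ℝ)) := isOpen_univ.prod isOpen_Iio
  have hsub : ((univ : Set (ES n)) ×ˢ Iio (0:ℝ)) ⊆ univ ×ˢ Iic 0 :=
    prod_mono (subset_refl _) Iio_subset_Iic_self
  have hCA : ContDiffAt ℝ (⊤ : ℕ∞) (fun p : (ES n) × ℝ => u p.1 p.2) (x, t) :=
    (h.mono hsub).contDiffAt (hopen.mem_nhds ⟨trivial, ht⟩)
  have hF := hCA.differentiableAt (by simp)
  exact hF.comp t ((differentiableAt_const x).prodMk differentiableAt_id)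

lemma hess_sub {g₁ g₂ : (ES n) → ℝ} (h₁ : ContDiff ℝ (⊤ : ℕ∞) g₁) (h₂ : ContDiff ℝ (⊤ : ℕ∞) g₂)
    (x v : ES n) :
    fderiv ℝ (fun y => fderiv ℝ (fun z => g₁ z - g₂ z) y v) x v
      = fderiv ℝ (fun y => fderiv ℝ g₁ y v) x v - fderiv ℝ (fun y => fderiv ℝ g₂ y v) x v := by
  have hfun : (fun y => fderiv ℝ (fun z => g₁ z - g₂ z) y v)
      = fun y => fderiv ℝ g₁ y v - fderiv ℝ g₂ y v := by
    funext y
    rw [fderiv_fun_sub (h₁.differentiable (by simp) y) (h₂.differentiable (by simp) y)]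
    simp
  rw [hfun, fderiv_fun_sub (((contDiff_hess h₁ v).differentiable (by simp)) x)
    (((contDiff_hess h₂ v).differentiable (by simp)) x)]
  simp

lemma fderiv_sub_eq {g₁ g₂ : (ES n) → ℝ} (h₁ : ContDiff ℝ (⊤ : ℕ∞) g₁) (h₂ : ContDiff ℝ (⊤ : ℕ∞) g₂)
    {x : ES n} (hx : fderiv ℝ (fun z => g₁ z - g₂ z) x = 0) :
    fderiv ℝ g₁ x = fderiv ℝ g₂ x := by
  have := fderiv_fun_sub (h₁.differentiable (by simp) x) (h₂.differentiable (by simp) x)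
  rw [hx] at this
  have h3 : fderiv ℝ g₁ x - fderiv ℝ g₂ x = 0 := this.symm
  rwa [sub_eq_zero] at h3

end Helpers2


lemma choose_consts (a c₀ nn Lg : ℝ) (ha : 0 < a) (hc₀ : 0 ≤ c₀) (hnn : 0 ≤ nn) :
    ∃ T R μ : ℝ, 1 ≤ T ∧ 1 ≤ R ∧ 0 < μ ∧ (-2 : ℝ) + -(2 * a) * T < Lg ∧
      (-2 : ℝ) + ((2 * nn * μ + 4 * μ ^ 2 * R ^ 2 + 2 * μ * c₀ * R) * T - μ * R ^ 2) < Lg := by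
  obtain ⟨T, hT1, hTa⟩ : ∃ T : ℝ, 1 ≤ T ∧ (-2 : ℝ) + -(2 * a) * T < Lg := by
    refine ⟨max 1 ((-2 - Lg + 1) / (2 * a)), le_max_left _ _, ?_⟩
    have h1 : (-2 - Lg + 1) / (2 * a) ≤ max 1 ((-2 - Lg + 1) / (2 * a)) := le_max_right _ _
    rw [div_le_iff₀ (by positivity)] at h1
    linarith only [h1]
  have hT0 : (0:ℝ) < T := lt_of_lt_of_le one_pos hT1
  obtain ⟨μ, hμ0, hμT⟩ : ∃ μ : ℝ, 0 < μ ∧ μ * (8 * T) = 1 :=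
    ⟨1 / (8 * T), by positivity, by field_simp⟩
  set B : ℝ := nn + |Lg| + 3 with hBdef
  have hB1 : 1 ≤ B := by
    have := abs_nonneg Lg
    rw [hBdef]; linarith
  obtain ⟨R, hR1, hkey⟩ : ∃ R : ℝ, 1 ≤ R ∧
      μ * R ^ 2 / 2 - c₀ * R / 4 = T * (c₀ + B) * B := by
    refine ⟨4 * T * (c₀ + B), ?_, ?_⟩
    · nlinarith
    · linear_combination (T * (c₀ + B) ^ 2) * hμT
  refine ⟨T, R, μ, hT1, hR1, hμ0, hTa, ?_⟩
  have hexpo : (2 * nn * μ + 4 * μ ^ 2 * R ^ 2 + 2 * μ * c₀ * R) * T - μ * R ^ 2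
      = nn / 4 + c₀ * R / 4 - μ * R ^ 2 / 2 := by
    linear_combination (nn / 4 + μ * R ^ 2 / 2 + c₀ * R / 4) * hμT
  rw [hexpo]
  have hTcB : B ≤ T * (c₀ + B) * B := by
    have hTc : 1 ≤ T * (c₀ + B) := by nlinarith
    have := mul_le_mul_of_nonneg_right hTc (le_trans zero_le_one hB1)
    rwa [one_mul] at this
  have h2 : -|Lg| ≤ Lg := neg_abs_le Lg
  rw [hBdef] at hTcB
  have h3 := abs_nonneg Lg
  linarith

set_option maxHeartbeats 2000000 in
/-- Nonexistence of positive ancient solutions of the nonlinear `f`-heat equation bounded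
above by `e^{-2}`, for `a > 0` (Euclidean case of Theorem 1.2(i)). -/
theorem no_small_ancient_solution_pos (n : ℕ) (hn : 1 ≤ n) (a : ℝ) (ha : 0 < a)
    (f : EuclideanSpace ℝ (Fin n) → ℝ) (hf : ContDiff ℝ (⊤ : ℕ∞) f)
    (hconv : ∀ x v : EuclideanSpace ℝ (Fin n), 0 ≤ hessQF f x v) :
    ¬ ∃ u : EuclideanSpace ℝ (Fin n) → ℝ → ℝ,
        ContDiffOn ℝ (⊤ : ℕ∞) (fun p : EuclideanSpace ℝ (Fin n) × ℝ => u p.1 p.2)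
          (univ ×ˢ Iic (0 : ℝ)) ∧
        (∀ (x : EuclideanSpace ℝ (Fin n)), ∀ t ≤ (0 : ℝ),
          0 < u x t ∧ u x t ≤ Real.exp (-2)) ∧
        (∀ (x : EuclideanSpace ℝ (Fin n)), ∀ t ≤ (0 : ℝ),
          deriv (fun s => u x s) t
            = fLap f (fun y => u y t) x + a * u x t * Real.log (u x t)) := by
  rintro ⟨u, hsm, hbd, heq⟩
  set c₀ : ℝ := ‖gradient f 0‖ with hc₀def
  have hc₀0 : 0 ≤ c₀ := norm_nonneg _
  have huc : 0 < u 0 (-1) := (hbd 0 (-1) (by norm_num)).1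
  set c : ℝ := u 0 (-1) with hcdef
  have hc2 : 0 < c / 2 := by positivity
  set Lg : ℝ := Real.log (c / 2) with hLgdef
  obtain ⟨T, R, μ, hT1, hR1, hμ0, hTa, hRa⟩ :=
    choose_consts a c₀ (n : ℝ) Lg ha hc₀0 (Nat.cast_nonneg n)
  have hT0 : (0:ℝ) < T := lt_of_lt_of_le one_pos hT1
  have hR0 : (0:ℝ) < R := lt_of_lt_of_le one_pos hR1
  have hcLg : c / 2 = Real.exp Lg := (Real.exp_log hc2).symm
  have hTlt : Real.exp (-2) * Real.exp (-(2 * a) * T) < c / 2 := by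
    rw [← Real.exp_add, hcLg]
    exact Real.exp_lt_exp.2 hTa
  set lam : ℝ := 2 * (n:ℝ) * μ + 4 * μ ^ 2 * R ^ 2 + 2 * μ * c₀ * R with hlamdef
  have hlam0 : 0 ≤ lam := by positivity
  have hRlt : Real.exp (-2) * Real.exp (lam * T - μ * R ^ 2) < c / 2 := by
    rw [← Real.exp_add, hcLg]
    apply Real.exp_lt_exp.2
    rw [hlamdef]
    exact hRa
  set ε : ℝ := Real.exp (-2 - μ * R ^ 2) with hεdef
  have hε0 : 0 < ε := Real.exp_pos _
  -- the barrier
  set t₁ : ℝ := -1 with ht₁def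
  set t₀ : ℝ := -1 - T with ht₀def
  have ht₀₁ : t₀ < t₁ := by rw [ht₀def, ht₁def]; linarith
  set Φ : EuclideanSpace ℝ (Fin n) → ℝ → ℝ := fun x t =>
    Real.exp (-2) * Real.exp (-(2 * a) * (t - t₀))
      + (ε * Real.exp (lam * (t - t₀))) * Real.exp (μ * ‖x‖ ^ 2) with hΦdef
  set K : Set (EuclideanSpace ℝ (Fin n) × ℝ) := closedBall 0 R ×ˢ Icc t₀ t₁ with hKdef
  have hKc : IsCompact K := (isCompact_closedBall _ _).prod isCompact_Icc
  have hKne : K.Nonempty := ⟨(0, t₀), by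
    constructor
    · simp [mem_closedBall]; linarith
    · exact ⟨le_refl _, le_of_lt ht₀₁⟩⟩
  have hKsub : K ⊆ univ ×ˢ Iic (0 : ℝ) := by
    rintro ⟨x, t⟩ ⟨hx, ht⟩
    exact ⟨trivial, le_trans ht.2 (by rw [ht₁def]; norm_num)⟩
  set H : EuclideanSpace ℝ (Fin n) × ℝ → ℝ := fun p => u p.1 p.2 - Φ p.1 p.2 with hHdef
  have hHcont : ContinuousOn H K := by
    apply ContinuousOn.sub
    · exact (hsm.continuousOn).mono hKsub
    · apply Continuous.continuousOn
      apply Continuous.add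
      · exact continuous_const.mul
          ((continuous_const.mul ((continuous_snd.sub continuous_const))).rexp)
      · exact (continuous_const.mul
          ((continuous_const.mul ((continuous_snd.sub continuous_const))).rexp)).mul
          ((continuous_const.mul ((continuous_fst.norm).pow 2)).rexp)
  obtain ⟨p, hpK, hpmax⟩ := hKc.exists_isMaxOn hKne hHcont
  -- main claim
  have hclaim : H p ≤ 0 := by
    by_contra hm
    push_neg at hm
    obtain ⟨hxK, htK⟩ := hpK
    set x := p.1 with hxdef
    set t := p.2 with htdef
    have hxR : ‖x‖ ≤ R := by rwa [mem_closedBall, dist_zero_right] at hxK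
    have ht0 : t < 0 := lt_of_le_of_lt htK.2 (by rw [ht₁def]; norm_num)
    have hub := hbd x t (le_of_lt ht0)
    -- exclude bottom and lateral boundary
    have hnotbot : t₀ < t := by
      rcases lt_or_eq_of_le htK.1 with h | h
      · exact h
      · exfalso
        have hΦval : Real.exp (-2) ≤ Φ x t := by
          rw [hΦdef, ← h]
          simp only []
          have h1 : 0 < (ε * Real.exp (lam * (t₀ - t₀))) * Real.exp (μ * ‖x‖ ^ 2) :=
            by positivity
          have h2 : -(2 * a) * (t₀ - t₀) = 0 := by ring
          rw [h2, Real.exp_zero]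
          linarith
        have : H p ≤ 0 := by
          rw [hHdef]
          simp only [← hxdef, ← htdef]
          have := hub.2
          rw [← h] at hΦval ⊢
          rw [← h] at this
          linarith
        linarith
    have hnotlat : ‖x‖ < R := by
      rcases lt_or_eq_of_le hxR with h | h
      · exact h
      · exfalso
        have hΦval : Real.exp (-2) ≤ Φ x t := by
          rw [hΦdef]
          simp only []
          have h1 : 0 < Real.exp (-2) * Real.exp (-(2 * a) * (t - t₀)) := by positivity
          have h2 : Real.exp (-2) ≤ (ε * Real.exp (lam * (t - t₀))) * Real.exp (μ * ‖x‖ ^ 2) := by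
            rw [hεdef, ← Real.exp_add, ← Real.exp_add, h]
            apply Real.exp_le_exp.2
            have : 0 ≤ lam * (t - t₀) := mul_nonneg hlam0 (by linarith)
            linarith
          linarith
        have : H p ≤ 0 := by
          rw [hHdef]
          simp only [← hxdef, ← htdef]
          have := hub.2
          linarith
        linarith
    -- spatial regularity of slices
    have hg₁ : ContDiff ℝ (⊤ : ℕ∞) (fun y => u y t) := slice_contDiff hsm (le_of_lt ht0)
    set cE : ℝ := ε * Real.exp (lam * (t - t₀)) with hcEdef
    have hcE0 : 0 < cE := by positivity
    set AE : ℝ := Real.exp (-2) * Real.exp (-(2 * a) * (t - t₀)) with hAEdef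
    have hAE0 : 0 < AE := by positivity
    have hΦslice : (fun y => Φ y t) = fun y : EuclideanSpace ℝ (Fin n) =>
        AE + cE * Real.exp (μ * ‖y‖ ^ 2) := by
      funext y
      rw [hΦdef]
    have hg₂ : ContDiff ℝ (⊤ : ℕ∞) (fun y => Φ y t) := by
      rw [hΦslice]
      exact contDiff_const.add
        (contDiff_const.mul (Real.contDiff_exp.comp
          (contDiff_const.mul (contDiff_norm_sq ℝ))))
    -- local max in space
    have hlmax : IsLocalMax (fun y => u y t - Φ y t) x := by
      have hball : ∀ᶠ y in nhds x, y ∈ ball (0 : EuclideanSpace ℝ (Fin n)) R :=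
        isOpen_ball.eventually_mem (mem_ball_zero_iff.2 hnotlat)
      filter_upwards [hball] with y hy
      have hyK : (y, t) ∈ K := ⟨ball_subset_closedBall hy, htK⟩
      have := hpmax hyK
      simpa [hHdef, ← hxdef, ← htdef] using this
    have hfd0 : fderiv ℝ (fun y => u y t - Φ y t) x = 0 := hlmax.fderiv_eq_zero
    have hfd : fderiv ℝ (fun y => u y t) x = fderiv ℝ (fun y => Φ y t) x :=
      fderiv_sub_eq hg₁ hg₂ hfd0
    -- Laplacian comparison at the max
    have heLap : eLap (fun y => u y t) x ≤ eLap (fun y => Φ y t) x := by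
      rw [eLap, eLap]
      apply Finset.sum_le_sum
      intro i _
      have h1 := hess_nonpos_of_isLocalMax (hg₁.sub hg₂) hlmax (EuclideanSpace.single i 1)
      rw [hess_sub hg₁ hg₂] at h1
      linarith
    have hinner : ⟪gradient f x, gradient (fun y => u y t) x⟫
        = ⟪gradient f x, gradient (fun y => Φ y t) x⟫ := by
      have e1 : ⟪gradient f x, gradient (fun y => u y t) x⟫
          = fderiv ℝ (fun y => u y t) x (gradient f x) := by
        rw [real_inner_comm]; exact inner_gradient_eq _ _ _
      have e2 : ⟪gradient f x, gradient (fun y => Φ y t) x⟫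
          = fderiv ℝ (fun y => Φ y t) x (gradient f x) := by
        rw [real_inner_comm]; exact inner_gradient_eq _ _ _
      rw [e1, e2, hfd]
    have hfLap : fLap f (fun y => u y t) x ≤ fLap f (fun y => Φ y t) x := by
      rw [fLap, fLap, hinner]
      linarith
    -- compute fLap of the barrier
    set Ex : ℝ := Real.exp (μ * ‖x‖ ^ 2) with hExdef
    have hEx : 0 < Ex := Real.exp_pos _
    have hcEEx : 0 < cE * Ex := mul_pos hcE0 hEx
    have hfLapΦ : fLap f (fun y => Φ y t) x ≤ lam * (cE * Ex) := by
      rw [fLap]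
      have he : eLap (fun y => Φ y t) x
          = cE * Real.exp (μ * ‖x‖ ^ 2) * ((2 * μ) * ((2 * μ) * ‖x‖ ^ 2 + n)) := by
        rw [hΦslice, eLap_const_add, eLap_bexp]
      have hgr : ⟪gradient f x, gradient (fun y => Φ y t) x⟫
          = cE * Real.exp (μ * ‖x‖ ^ 2) * (2 * μ) * ⟪x, gradient f x⟫ := by
        rw [real_inner_comm, inner_gradient_eq, hΦslice]
        have : fderiv ℝ (fun y : EuclideanSpace ℝ (Fin n) =>
            AE + cE * Real.exp (μ * ‖y‖ ^ 2)) x (gradient f x)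
            = fderiv ℝ (fun y : EuclideanSpace ℝ (Fin n) =>
              cE * Real.exp (μ * ‖y‖ ^ 2)) x (gradient f x) := by
          rw [fderiv_const_add]
        rw [this, fderiv_bexp]
    -- lower bound for ⟪x, ∇f x⟫
      have hlow : -(c₀ * R) ≤ ⟪x, gradient f x⟫ := by
        have h1 := inner_gradf_lower hf hconv x
        rw [real_inner_comm, inner_gradient_eq]
        have h2 : c₀ * ‖x‖ ≤ c₀ * R := by
          apply mul_le_mul_of_nonneg_left hxR hc₀0
        rw [← hc₀def] at h1
        linarith
      rw [he, hgr]
      have hx2 : ‖x‖ ^ 2 ≤ R ^ 2 := pow_le_pow_left₀ (norm_nonneg x) hxR 2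
      have k1 : (cE * Ex * (4 * μ ^ 2)) * ‖x‖ ^ 2 ≤ (cE * Ex * (4 * μ ^ 2)) * R ^ 2 :=
        mul_le_mul_of_nonneg_left hx2 (by positivity)
      have k2 : (cE * Ex * (2 * μ)) * (-(c₀ * R)) ≤ (cE * Ex * (2 * μ)) * ⟪x, gradient f x⟫ :=
        mul_le_mul_of_nonneg_left hlow (by positivity)
      rw [hlamdef, hExdef]
      rw [hExdef] at k1 k2
      linarith only [k1, k2]
    -- time derivative of the barrier
    set Φt : ℝ := AE * (-(2 * a)) + lam * (cE * Ex) with hΦtdef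
    have hΦd : HasDerivAt (fun s => Φ x s) Φt t := by
      have h1 : HasDerivAt (fun s : ℝ => -(2 * a) * (s - t₀)) (-(2 * a)) t := by
        simpa using ((hasDerivAt_id t).sub_const t₀).const_mul (-(2 * a))
      have h2 : HasDerivAt (fun s : ℝ => lam * (s - t₀)) lam t := by
        simpa using ((hasDerivAt_id t).sub_const t₀).const_mul lam
      have h3 := (h1.exp.const_mul (Real.exp (-2)))
      have h4 := ((h2.exp.const_mul ε).mul_const (Real.exp (μ * ‖x‖ ^ 2)))
      have h5 := h3.fun_add h4
      rw [hΦdef, hΦtdef, hAEdef, hcEdef, hExdef]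
      refine h5.congr_deriv ?_
      ring
    -- time derivative test at the max
    have hud : DifferentiableAt ℝ (fun s => u x s) t := time_differentiable hsm ht0
    have hHd : HasDerivAt (fun s => u x s - Φ x s)
        (deriv (fun s => u x s) t - Φt) t := hud.hasDerivAt.sub hΦd
    have hmono : ∀ s ∈ Icc t₀ t, u x s - Φ x s ≤ u x t - Φ x t := by
      intro s hs
      have hsK : (x, s) ∈ K := ⟨hxK, ⟨hs.1, le_trans hs.2 htK.2⟩⟩
      have := hpmax hsK
      simpa [hHdef, ← hxdef, ← htdef] using this
    have h0le : 0 ≤ deriv (fun s => u x s) t - Φt :=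
      deriv_nonneg_right hnotbot hHd hmono
    -- assemble
    have hequ := heq x t (le_of_lt ht0)
    have hlog : Real.log (u x t) ≤ -2 := by
      have := Real.log_le_log hub.1 hub.2
      rwa [Real.log_exp] at this
    have hlogineq : a * u x t * Real.log (u x t) ≤ -(2 * a) * u x t := by
      have h1 : 0 ≤ a * u x t := le_of_lt (mul_pos ha hub.1)
      have h2 := mul_le_mul_of_nonneg_left hlog h1
      linarith only [h2]
    have hΦx : Φ x t = AE + cE * Ex := by rw [hΦdef, hAEdef, hcEdef, hExdef]
    have huΦ : Φ x t < u x t := by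
      have := hm
      rw [hHdef] at this
      simp only [← hxdef, ← htdef] at this
      linarith
    rw [hequ] at h0le
    rw [hΦtdef] at h0le
    rw [hΦx] at huΦ
    have h2a : (0:ℝ) < 2 * a := by linarith
    have hprod : (2 * a) * (AE + cE * Ex) < (2 * a) * u x t :=
      mul_lt_mul_of_pos_left huΦ h2a
    have hacE : 0 < a * (cE * Ex) := mul_pos ha hcEEx
    linarith only [h0le, hfLap, hfLapΦ, hlogineq, hprod, hacE]
  -- derive the contradiction
  have h0K : ((0 : EuclideanSpace ℝ (Fin n)), t₁) ∈ K := by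
    constructor
    · simp [mem_closedBall]; linarith
    · exact ⟨le_of_lt ht₀₁, le_refl _⟩
  have hH0 : H (0, t₁) ≤ 0 := le_trans (hpmax h0K) hclaim
  have hΦ0 : Φ 0 t₁ = Real.exp (-2) * Real.exp (-(2 * a) * T)
      + Real.exp (-2) * Real.exp (lam * T - μ * R ^ 2) := by
    have hsplit : Real.exp (-2) * Real.exp (lam * T - μ * R ^ 2)
        = ε * Real.exp (lam * T) := by
      rw [hεdef, ← Real.exp_add, ← Real.exp_add]
      congr 1
      ring
    rw [hΦdef]
    simp only [norm_zero]
    have h1 : t₁ - t₀ = T := by rw [ht₁def, ht₀def]; ring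
    have h2 : μ * (0:ℝ) ^ 2 = 0 := by ring
    rw [h1, h2, Real.exp_zero, mul_one, hsplit]
  have hut₁ : u 0 t₁ = c := hcdef.symm
  rw [hHdef] at hH0
  simp only [] at hH0
  rw [hut₁, hΦ0] at hH0
  linarith
end
end

section
/- Let n ≥ 1, let a < 0, and let f : ℝⁿ → ℝ be smooth and convex (⟨Hess f(x) v, v⟩ ≥ 0 for all x, v ∈ ℝⁿ, i.e. Ric_f ≥ 0 in the Euclidean setting). Let u : ℝⁿ × (−∞, 0] → ℝ be a smooth positive ancient solution to the nonlinear f-heat equation ∂u/∂t = Δ_f u + a·u·ln u satisfying e^{−2} ≤ u(x,t) ≤ D for some constant D and all (x,t). Then D ≥ 1 and u ≡ 1; in particular, if D < 1 then no such solution exists. (This is the Euclidean-space case of the paper's Theorem 1.2(ii).) -/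
open Metric Set
open scoped RealInnerProductSpace

noncomputable section

set_option maxHeartbeats 1000000

section AuxLemmas

open Filter

/-- Right-endpoint first derivative test. -/
lemma right_endpoint_deriv_nonneg' {φ : ℝ → ℝ} {T t₁ d : ℝ} (hT : T < t₁)
    (hd : HasDerivAt φ d t₁) (hmax : ∀ t ∈ Icc T t₁, φ t ≤ φ t₁) : 0 ≤ d := by
  have hs := hasDerivAt_iff_tendsto_slope.1 hd
  have hs' : Tendsto (slope φ t₁) (nhdsWithin t₁ (Iio t₁)) (nhds d) :=
    hs.mono_left (nhdsWithin_mono _ (fun x hx => ne_of_lt hx))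
  refine ge_of_tendsto hs' ?_
  filter_upwards [Ioo_mem_nhdsLT_of_mem (⟨hT, le_refl t₁⟩ : t₁ ∈ Ioc T t₁)] with t ht
  rw [slope_def_field]
  have h1 : φ t - φ t₁ ≤ 0 := by
    have := hmax t ⟨le_of_lt ht.1, le_of_lt ht.2⟩; linarith
  have h2 : t - t₁ < 0 := by linarith [ht.2]
  exact div_nonneg_of_nonpos h1 (le_of_lt h2)

/-- Second derivative test at an interior local maximum (1-D). -/
lemma second_deriv_test' {g h : ℝ → ℝ} {d2 : ℝ}
    (hder : ∀ s : ℝ, HasDerivAt g (h s) s)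
    (hh : HasDerivAt h d2 0)
    (hmax : IsLocalMax g 0) : d2 ≤ 0 := by
  by_contra hpos
  push_neg at hpos
  have h0 : h 0 = 0 := by
    have h1 := hmax.deriv_eq_zero
    rwa [(hder 0).deriv] at h1
  have hslope := hasDerivAt_iff_tendsto_slope.1 hh
  have hev : ∀ᶠ s in nhdsWithin (0:ℝ) {(0:ℝ)}ᶜ, 0 < slope h 0 s :=
    hslope.eventually (eventually_gt_nhds hpos)
  rw [eventually_nhdsWithin_iff] at hev
  obtain ⟨δ₁, hδ₁, H1⟩ := Metric.eventually_nhds_iff.1 hev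
  obtain ⟨δ₂, hδ₂, H2⟩ := Metric.eventually_nhds_iff.1 hmax
  set δ := min δ₁ δ₂ / 2 with hδdef
  have hδpos : 0 < δ := by positivity
  have hδ1 : δ < δ₁ := by
    have : δ ≤ δ₁ / 2 := by
      rw [hδdef]; gcongr; exact min_le_left _ _
    nlinarith
  have hδ2 : δ < δ₂ := by
    have : δ ≤ δ₂ / 2 := by
      rw [hδdef]; gcongr; exact min_le_right _ _
    nlinarith
  have hpos' : ∀ s, 0 < s → s ≤ δ → 0 < h s := by
    intro s hs1 hs2
    have hd : dist s 0 < δ₁ := by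
      rw [Real.dist_eq, sub_zero, abs_of_pos hs1]; linarith
    have := H1 hd (by simpa using ne_of_gt hs1)
    rw [slope_def_field, h0, sub_zero, sub_zero] at this
    have := mul_pos this hs1
    rw [div_mul_cancel₀] at this
    · exact this
    · exact ne_of_gt hs1
  have hmono : StrictMonoOn g (Icc 0 δ) := by
    apply strictMonoOn_of_deriv_pos (convex_Icc 0 δ)
    · intro s _; exact (hder s).differentiableAt.continuousAt.continuousWithinAt
    · intro s hs
      rw [interior_Icc] at hs
      rw [(hder s).deriv]
      exact hpos' s hs.1 (le_of_lt hs.2)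
  have hlt : g 0 < g δ := hmono ⟨le_refl 0, le_of_lt hδpos⟩ ⟨le_of_lt hδpos, le_refl δ⟩ hδpos
  have : g δ ≤ g 0 := by
    apply H2
    rw [Real.dist_eq, sub_zero, abs_of_pos hδpos]; exact hδ2
  linarith

lemma grad_inner' {n : ℕ} (f : EuclideanSpace ℝ (Fin n) → ℝ) (y v : EuclideanSpace ℝ (Fin n)) :
    ⟪gradient f y, v⟫ = fderiv ℝ f y v :=
  InnerProductSpace.toDual_symm_apply

lemma grad_mono' {n : ℕ} {f : EuclideanSpace ℝ (Fin n) → ℝ} (hf : ContDiff ℝ (⊤ : ℕ∞) f)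
    (hconv : ∀ x v, 0 ≤ hessQF f x v) (x₀ x : EuclideanSpace ℝ (Fin n)) :
    ⟪gradient f x₀, x - x₀⟫ ≤ ⟪gradient f x, x - x₀⟫ := by
  set v := x - x₀ with hv
  set η : ℝ → ℝ := fun s => fderiv ℝ f (x₀ + s • v) v with hη
  have hfd : ContDiff ℝ 1 (fderiv ℝ f) := hf.fderiv_right (WithTop.coe_le_coe.2 le_top)
  have happ : Differentiable ℝ (fun y => fderiv ℝ f y v) :=
    (ContinuousLinearMap.apply ℝ ℝ v).differentiable.comp (hfd.differentiable (by norm_num))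
  have hline : ∀ s : ℝ, HasDerivAt (fun s : ℝ => x₀ + s • v) v s := by
    intro s
    have h1 : HasDerivAt (fun s : ℝ => s • v) ((1:ℝ) • v) s := (hasDerivAt_id s).smul_const v
    rw [one_smul] at h1
    exact h1.const_add x₀
  have hηd : ∀ s : ℝ, HasDerivAt η (hessQF f (x₀ + s • v) v) s := by
    intro s
    have h1 : HasFDerivAt (fun y => fderiv ℝ f y v)
        (fderiv ℝ (fun y => fderiv ℝ f y v) (x₀ + s • v)) (x₀ + s • v) :=
      (happ _).hasFDerivAt
    exact h1.comp_hasDerivAt s (hline s)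
  have hmono : Monotone η := by
    apply monotone_of_deriv_nonneg (fun s => (hηd s).differentiableAt)
    intro s; rw [(hηd s).deriv]; exact hconv _ _
  have h01 : η 0 ≤ η 1 := hmono zero_le_one
  have e0 : η 0 = fderiv ℝ f x₀ v := by simp [hη]
  have e1 : η 1 = fderiv ℝ f x v := by simp [hη, hv]
  rw [grad_inner', grad_inner']
  rw [e0, e1] at h01
  exact h01

lemma euclid_inner_sum' {n : ℕ} (v w : EuclideanSpace ℝ (Fin n)) :
    ⟪v, w⟫ = ∑ i, v i * w i := by
  simp [PiLp.inner_apply, RCLike.inner_apply, starRingEnd_apply]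
  exact Finset.sum_congr rfl fun i _ => mul_comm _ _

lemma q_deriv' {n : ℕ} (x₀ y : EuclideanSpace ℝ (Fin n)) :
    HasFDerivAt (fun z : EuclideanSpace ℝ (Fin n) => ∑ i, (z i - x₀ i) * (z i - x₀ i))
      (∑ i, (2 * (y i - x₀ i)) • (EuclideanSpace.proj (𝕜 := ℝ) i)) y := by
  apply HasFDerivAt.fun_sum
  intro i _
  have hi : HasFDerivAt (fun z : EuclideanSpace ℝ (Fin n) => z i - x₀ i)
      (EuclideanSpace.proj (𝕜 := ℝ) i) y :=
    (EuclideanSpace.proj (𝕜 := ℝ) i).hasFDerivAt.sub_const (x₀ i)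
  have h2 := hi.mul hi
  rw [two_mul, add_smul]; exact h2

lemma q_deriv_apply' {n : ℕ} (x₀ y v : EuclideanSpace ℝ (Fin n)) :
    (∑ i, (2 * (y i - x₀ i)) • (EuclideanSpace.proj (𝕜 := ℝ) i)) v
      = ∑ i, 2 * (y i - x₀ i) * v i := by
  simp [ContinuousLinearMap.sum_apply, ContinuousLinearMap.smul_apply, mul_comm]

lemma q_deriv_inner' {n : ℕ} (x₀ y v : EuclideanSpace ℝ (Fin n)) :
    (∑ i, (2 * (y i - x₀ i)) • (EuclideanSpace.proj (𝕜 := ℝ) i)) v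
      = 2 * ⟪y - x₀, v⟫ := by
  rw [q_deriv_apply', euclid_inner_sum', Finset.mul_sum]
  apply Finset.sum_congr rfl
  intro i _
  rw [PiLp.sub_apply]
  ring

lemma inner_single_coord' {n : ℕ} (w : EuclideanSpace ℝ (Fin n)) (i : Fin n) :
    ⟪w, EuclideanSpace.single i (1:ℝ)⟫ = w i := by
  rw [euclid_inner_sum', Finset.sum_eq_single i]
  · simp [EuclideanSpace.single_apply]
  · intro j _ hij; simp [EuclideanSpace.single_apply, hij]
  · simp

lemma q_eq_norm' {n : ℕ} (x₀ y : EuclideanSpace ℝ (Fin n)) :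
    ∑ i, (y i - x₀ i) * (y i - x₀ i) = ‖y - x₀‖ ^ 2 := by
  rw [← real_inner_self_eq_norm_sq, euclid_inner_sum']
  apply Finset.sum_congr rfl
  intro i _
  rw [PiLp.sub_apply]

lemma q_nonneg' {n : ℕ} (x₀ y : EuclideanSpace ℝ (Fin n)) :
    0 ≤ ∑ i, (y i - x₀ i) * (y i - x₀ i) :=
  Finset.sum_nonneg fun i _ => mul_self_nonneg _

lemma q_cont' {n : ℕ} (x₀ : EuclideanSpace ℝ (Fin n)) :
    Continuous (fun z : EuclideanSpace ℝ (Fin n) => ∑ i, (z i - x₀ i) * (z i - x₀ i)) := by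
  apply continuous_finset_sum
  intro i _
  have : Continuous (fun z : EuclideanSpace ℝ (Fin n) => z i - x₀ i) :=
    (EuclideanSpace.proj (𝕜 := ℝ) i).continuous.sub continuous_const
  exact this.mul this

end AuxLemmas

section Spatial
open Filter

/-- Spatial information at an interior local max of `σ(log U - φc) - μ(1+|x-x₀|²)`. -/
lemma spatial_max_info' {n : ℕ} {U : EuclideanSpace ℝ (Fin n) → ℝ}
    (hCU : ∀ y, ContDiffAt ℝ 2 U y) (hUpos : ∀ y, 0 < U y)
    {σ μ φc : ℝ} (hσ2 : σ * σ = 1) (hμ : 0 < μ)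
    {x₀ x₁ : EuclideanSpace ℝ (Fin n)}
    (hloc : IsLocalMax (fun z => σ * (Real.log (U z) - φc)
      - μ * (1 + ∑ i, (z i - x₀ i) * (z i - x₀ i))) x₁) :
    (∀ v, fderiv ℝ U x₁ v = σ * U x₁ * μ * (2 * ⟪x₁ - x₀, v⟫)) ∧
    σ * ((U x₁)⁻¹ * eLap U x₁)
      ≤ σ * (4 * μ^2 * (∑ i, (x₁ i - x₀ i) * (x₁ i - x₀ i))) + 2 * n * μ := by
  have hUdiff : ∀ y, DifferentiableAt ℝ U y := fun y => (hCU y).differentiableAt two_ne_zero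
  set P := U x₁ with hPdef
  have hP : 0 < P := hUpos x₁
  have hPinv : P * P⁻¹ = 1 := mul_inv_cancel₀ hP.ne'
  set Fs : EuclideanSpace ℝ (Fin n) → ℝ := fun z => σ * (Real.log (U z) - φc)
      - μ * (1 + ∑ i, (z i - x₀ i) * (z i - x₀ i)) with hFsdef
  set FD : EuclideanSpace ℝ (Fin n) → (EuclideanSpace ℝ (Fin n) →L[ℝ] ℝ) := fun y =>
      σ • ((U y)⁻¹ • fderiv ℝ U y)
      - μ • (∑ i, (2 * (y i - x₀ i)) • (EuclideanSpace.proj (𝕜 := ℝ) i)) with hFDdef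
  have hFs : ∀ y, HasFDerivAt Fs (FD y) y := by
    intro y
    have hlog : HasFDerivAt (fun z => Real.log (U z)) ((U y)⁻¹ • fderiv ℝ U y) y :=
      (hUdiff y).hasFDerivAt.log (hUpos y).ne'
    have h1 : HasFDerivAt (fun z => σ * (Real.log (U z) - φc))
        (σ • ((U y)⁻¹ • fderiv ℝ U y)) y := (hlog.sub_const φc).const_mul σ
    have h2 : HasFDerivAt
        (fun z : EuclideanSpace ℝ (Fin n) => μ * (1 + ∑ i, (z i - x₀ i) * (z i - x₀ i)))
        (μ • (∑ i, (2 * (y i - x₀ i)) • (EuclideanSpace.proj (𝕜 := ℝ) i))) y :=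
      ((q_deriv' x₀ y).const_add 1).const_mul μ
    exact h1.sub h2
  -- first order condition
  have hFD0 : FD x₁ = 0 := by
    rw [← (hFs x₁).fderiv]; exact hloc.fderiv_eq_zero
  have hc1 : ∀ v, fderiv ℝ U x₁ v = σ * U x₁ * μ * (2 * ⟪x₁ - x₀, v⟫) := by
    intro v
    have e0 := congrArg (fun L : EuclideanSpace ℝ (Fin n) →L[ℝ] ℝ => L v) hFD0
    simp only [hFDdef, ContinuousLinearMap.sub_apply, ContinuousLinearMap.smul_apply,
      ContinuousLinearMap.zero_apply, smul_eq_mul] at e0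
    rw [q_deriv_inner'] at e0
    have : σ * (P⁻¹ * fderiv ℝ U x₁ v) - μ * (2 * ⟪x₁ - x₀, v⟫) = 0 := e0
    have h2 : σ * (P⁻¹ * fderiv ℝ U x₁ v) = μ * (2 * ⟪x₁ - x₀, v⟫) := by linarith
    calc fderiv ℝ U x₁ v = (σ * σ) * (P * P⁻¹) * fderiv ℝ U x₁ v := by
          rw [hσ2, hPinv]; ring
      _ = σ * P * (σ * (P⁻¹ * fderiv ℝ U x₁ v)) := by ring
      _ = σ * P * (μ * (2 * ⟪x₁ - x₀, v⟫)) := by rw [h2]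
      _ = σ * U x₁ * μ * (2 * ⟪x₁ - x₀, v⟫) := by rw [← hPdef]; ring
  refine ⟨hc1, ?_⟩
  -- second-order test per coordinate
  have hc2 : ∀ i : Fin n,
      σ * (P⁻¹ * (fderiv ℝ (fun y => fderiv ℝ U y (EuclideanSpace.single i 1)) x₁
          (EuclideanSpace.single i 1))
        + (fderiv ℝ U x₁ (EuclideanSpace.single i 1))
          * (-(P^2)⁻¹ * (fderiv ℝ U x₁ (EuclideanSpace.single i 1)))) - μ * 2 ≤ 0 := by
    intro i
    set ei := EuclideanSpace.single i (1:ℝ) with heidef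
    set Li : EuclideanSpace ℝ (Fin n) → ℝ := fun y => fderiv ℝ U y ei with hLidef
    have hLidiff : DifferentiableAt ℝ Li x₁ := by
      have h1 : ContDiffAt ℝ 1 (fderiv ℝ U) x₁ := (hCU x₁).fderiv_right (by norm_num)
      exact ((ContinuousLinearMap.apply ℝ ℝ ei).differentiableAt).comp x₁
        (h1.differentiableAt one_ne_zero)
    set Gi : EuclideanSpace ℝ (Fin n) → ℝ := fun y =>
      σ * ((U y)⁻¹ * Li y) - μ * (2 * (y i - x₀ i)) with hGidef
    have hFDei : ∀ y, FD y ei = Gi y := by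
      intro y
      simp only [hFDdef, hGidef, hLidef, ContinuousLinearMap.sub_apply,
        ContinuousLinearMap.smul_apply, smul_eq_mul]
      have : (∑ j, (2 * (y j - x₀ j)) • (EuclideanSpace.proj (𝕜 := ℝ) j)) ei
          = 2 * (y i - x₀ i) := by
        rw [heidef, q_deriv_inner', inner_single_coord', PiLp.sub_apply]
      rw [this]
    have hline : ∀ s : ℝ, HasDerivAt (fun s : ℝ => x₁ + s • ei) ei s := by
      intro s
      have h1 : HasDerivAt (fun s : ℝ => s • ei) ((1:ℝ) • ei) s := (hasDerivAt_id s).smul_const ei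
      rw [one_smul] at h1
      exact h1.const_add x₁
    have h0 : x₁ + (0:ℝ) • ei = x₁ := by simp
    have hgline : ∀ s : ℝ, HasDerivAt (fun s : ℝ => Fs (x₁ + s • ei)) (Gi (x₁ + s • ei)) s := by
      intro s
      have h2 := (hFs (x₁ + s • ei)).comp_hasDerivAt s (hline s)
      rw [hFDei] at h2
      exact h2
    -- derivative of Gi at x₁
    have hinv : HasFDerivAt (fun y => (U y)⁻¹) ((-(P^2)⁻¹) • fderiv ℝ U x₁) x₁ :=
      (hasDerivAt_inv hP.ne').comp_hasFDerivAt x₁ (hUdiff x₁).hasFDerivAt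
    have hmul := hinv.mul hLidiff.hasFDerivAt
    have hA : HasFDerivAt (fun y : EuclideanSpace ℝ (Fin n) => y i - x₀ i)
        (EuclideanSpace.proj (𝕜 := ℝ) i) x₁ :=
      (EuclideanSpace.proj (𝕜 := ℝ) i).hasFDerivAt.sub_const (x₀ i)
    have hGiF : HasFDerivAt Gi
        (σ • ((U x₁)⁻¹ • fderiv ℝ Li x₁ + Li x₁ • ((-(P^2)⁻¹) • fderiv ℝ U x₁))
          - μ • ((2:ℝ) • (EuclideanSpace.proj (𝕜 := ℝ) i))) x₁ :=
      ((hmul.const_mul σ).sub ((hA.const_mul (2:ℝ)).const_mul μ))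
    have hd2 : HasDerivAt (fun s : ℝ => Gi (x₁ + s • ei))
        ((σ • ((U x₁)⁻¹ • fderiv ℝ Li x₁ + Li x₁ • ((-(P^2)⁻¹) • fderiv ℝ U x₁))
          - μ • ((2:ℝ) • (EuclideanSpace.proj (𝕜 := ℝ) i))) ei) (0:ℝ) := by
      have hGiF' : HasFDerivAt Gi
          (σ • ((U x₁)⁻¹ • fderiv ℝ Li x₁ + Li x₁ • ((-(P^2)⁻¹) • fderiv ℝ U x₁))
            - μ • ((2:ℝ) • (EuclideanSpace.proj (𝕜 := ℝ) i))) (x₁ + (0:ℝ) • ei) := by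
        rw [h0]; exact hGiF
      exact hGiF'.comp_hasDerivAt 0 (hline 0)
    have hlm : IsLocalMax (fun s : ℝ => Fs (x₁ + s • ei)) (0:ℝ) := by
      have hcont : ContinuousAt (fun s : ℝ => x₁ + s • ei) 0 :=
        (continuous_const.add (continuous_id.smul continuous_const)).continuousAt
      have htend : Tendsto (fun s : ℝ => x₁ + s • ei) (nhds 0) (nhds x₁) := by
        have := hcont.tendsto
        rwa [h0] at this
      have hev := htend.eventually hloc
      have hgoal : ∀ᶠ s in nhds (0:ℝ), Fs (x₁ + s • ei) ≤ Fs (x₁ + (0:ℝ) • ei) := by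
        rw [h0]; exact hev
      exact hgoal
    have hfin := second_deriv_test' hgline hd2 hlm
    -- compute the applied value
    have hval : (σ • ((U x₁)⁻¹ • fderiv ℝ Li x₁ + Li x₁ • ((-(P^2)⁻¹) • fderiv ℝ U x₁))
          - μ • ((2:ℝ) • (EuclideanSpace.proj (𝕜 := ℝ) i))) ei
        = σ * (P⁻¹ * (fderiv ℝ Li x₁ ei) + Li x₁ * (-(P^2)⁻¹ * (fderiv ℝ U x₁ ei)))
          - μ * 2 := by
      have hproj : (EuclideanSpace.proj (𝕜 := ℝ) i) ei = 1 := by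
        rw [heidef]
        simp [EuclideanSpace.single_apply]
      simp only [ContinuousLinearMap.sub_apply, ContinuousLinearMap.smul_apply,
        ContinuousLinearMap.add_apply, smul_eq_mul, hproj, ← hPdef]
      ring
    rw [hval] at hfin
    simpa only [hLidef, heidef] using hfin
  -- sum over coordinates
  have hPinv2 : P^2 * (P^2)⁻¹ = 1 := mul_inv_cancel₀ (pow_ne_zero 2 hP.ne')
  have hsum : ∑ i : Fin n,
      (σ * (P⁻¹ * (fderiv ℝ (fun y => fderiv ℝ U y (EuclideanSpace.single i 1)) x₁
          (EuclideanSpace.single i 1))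
        + (fderiv ℝ U x₁ (EuclideanSpace.single i 1))
          * (-(P^2)⁻¹ * (fderiv ℝ U x₁ (EuclideanSpace.single i 1)))) - μ * 2) ≤ 0 :=
    Finset.sum_nonpos (fun i _ => hc2 i)
  have hDi : ∀ i : Fin n,
      fderiv ℝ U x₁ (EuclideanSpace.single i 1) = σ * P * μ * (2 * (x₁ i - x₀ i)) := by
    intro i
    rw [hc1 (EuclideanSpace.single i 1), inner_single_coord', PiLp.sub_apply, ← hPdef]
  have hsum2 : ∑ i : Fin n,
      (σ * (P⁻¹ * (fderiv ℝ (fun y => fderiv ℝ U y (EuclideanSpace.single i 1)) x₁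
          (EuclideanSpace.single i 1)))
        - σ * (4 * μ^2 * ((x₁ i - x₀ i) * (x₁ i - x₀ i))) - 2 * μ) ≤ 0 := by
    refine le_trans (le_of_eq (Finset.sum_congr rfl ?_)) hsum
    intro i _
    rw [hDi i]
    linear_combination (4 * μ^2 * ((x₁ i - x₀ i) * (x₁ i - x₀ i)) * σ * (P^2 * (P^2)⁻¹)) * hσ2
      + (4 * μ^2 * ((x₁ i - x₀ i) * (x₁ i - x₀ i)) * σ) * hPinv2
  have e1 : ∑ i : Fin n,
      (σ * (P⁻¹ * (fderiv ℝ (fun y => fderiv ℝ U y (EuclideanSpace.single i 1)) x₁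
          (EuclideanSpace.single i 1)))
        - σ * (4 * μ^2 * ((x₁ i - x₀ i) * (x₁ i - x₀ i))) - 2 * μ)
      = σ * (P⁻¹ * ∑ i : Fin n, (fderiv ℝ (fun y => fderiv ℝ U y (EuclideanSpace.single i 1)) x₁
          (EuclideanSpace.single i 1)))
        - σ * (4 * μ^2 * ∑ i : Fin n, ((x₁ i - x₀ i) * (x₁ i - x₀ i)))
        - (n : ℝ) * (2 * μ) := by
    rw [Finset.sum_sub_distrib, Finset.sum_sub_distrib, ← Finset.mul_sum, ← Finset.mul_sum,
      ← Finset.mul_sum, ← Finset.mul_sum, Finset.sum_const, Finset.card_univ, Fintype.card_fin,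
      nsmul_eq_mul]
  rw [e1] at hsum2
  have heL : eLap U x₁ = ∑ i : Fin n, (fderiv ℝ (fun y => fderiv ℝ U y (EuclideanSpace.single i 1)) x₁
      (EuclideanSpace.single i 1)) := rfl
  rw [heL]
  nlinarith [hsum2]

end Spatial

section KeyComp
open Filter

lemma key_comp' {n : ℕ} {a : ℝ} (ha : a < 0)
    {f : EuclideanSpace ℝ (Fin n) → ℝ} (hf : ContDiff ℝ (⊤ : ℕ∞) f)
    (hconv : ∀ x v : EuclideanSpace ℝ (Fin n), 0 ≤ hessQF f x v)
    {D : ℝ} {u : EuclideanSpace ℝ (Fin n) → ℝ → ℝ}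
    (hu : ContDiffOn ℝ (⊤ : ℕ∞) (fun p : EuclideanSpace ℝ (Fin n) × ℝ => u p.1 p.2)
      (univ ×ˢ Iic (0 : ℝ)))
    (hbd : ∀ (x : EuclideanSpace ℝ (Fin n)), ∀ t ≤ (0 : ℝ),
      Real.exp (-2) ≤ u x t ∧ u x t ≤ D)
    (heq : ∀ (x : EuclideanSpace ℝ (Fin n)), ∀ t ≤ (0 : ℝ),
      deriv (fun s => u x s) t
        = fLap f (fun y => u y t) x + a * u x t * Real.log (u x t))
    {σ : ℝ} (hσ : σ = 1 ∨ σ = -1) (x₀ : EuclideanSpace ℝ (Fin n)) {t₀ : ℝ} (ht₀ : t₀ < 0) :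
    σ * Real.log (u x₀ t₀) ≤ 0 := by
  by_contra hcon
  push_neg at hcon
  have hσ2 : σ * σ = 1 := by rcases hσ with h | h <;> rw [h] <;> norm_num
  have hσ1 : σ ≤ 1 := by rcases hσ with h | h <;> rw [h] <;> norm_num
  have hupos : ∀ x, ∀ t ≤ (0:ℝ), 0 < u x t := fun x t ht =>
    lt_of_lt_of_le (Real.exp_pos _) (hbd x t ht).1
  have hD : 0 < D := lt_of_lt_of_le (hupos x₀ t₀ ht₀.le) (hbd x₀ t₀ ht₀.le).2
  set W : ℝ := max (Real.log D) 2 with hWdef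
  have hW2 : 2 ≤ W := le_max_right _ _
  have hlogbd : ∀ x, ∀ t ≤ (0:ℝ), σ * Real.log (u x t) ≤ W := by
    intro x t ht
    have h1 : Real.log (u x t) ≤ Real.log D := Real.log_le_log (hupos x t ht) (hbd x t ht).2
    have h2 : -2 ≤ Real.log (u x t) := by
      have := Real.log_le_log (Real.exp_pos _) (hbd x t ht).1
      rwa [Real.log_exp] at this
    have h3 : Real.log D ≤ W := le_max_left _ _
    rcases hσ with h | h <;> rw [h]
    · linarith only [h1, h3]
    · linarith only [h2, hW2]
  set c : ℝ := Real.log (u x₀ t₀) / 2 with hcdef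
  have hσc : 0 < σ * c := by
    have hh : σ * c = σ * Real.log (u x₀ t₀) / 2 := by rw [hcdef]; ring
    rw [hh]; linarith only [hcon]
  set K : ℝ := ‖gradient f x₀‖ with hKdef
  have hK0 : 0 ≤ K := norm_nonneg _
  set B : ℝ := 2 * n + K ^ 2 + 3 with hBdef
  have hB0 : 0 < B := by positivity
  set X : ℝ := (W + 1) / (σ * c) with hXdef
  have hX0 : 0 < X := div_pos (by linarith only [hW2]) hσc
  set T : ℝ := t₀ - X / (-a) with hTdef
  have hTlt : T < t₀ := by
    rw [hTdef]
    have : 0 < X / (-a) := div_pos hX0 (by linarith only [ha])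
    linarith only [this]
  have haT : a * (T - t₀) = X := by
    rw [hTdef]
    field_simp
    rw [show t₀ - -(X / a) - t₀ = X / a by ring]
    field_simp
    exact div_self (ne_of_lt ha)
  set gmax : ℝ := Real.exp (B * (t₀ - T)) with hgmaxdef
  have hgmax1 : 1 ≤ gmax := by
    rw [hgmaxdef]
    apply Real.one_le_exp
    have : 0 ≤ t₀ - T := by linarith only [hTlt]
    positivity
  have hgmax0 : 0 < gmax := lt_of_lt_of_le one_pos hgmax1
  set ε : ℝ := min (σ * c / (2 * gmax)) (1 / (4 * gmax)) with hεdef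
  have hε0 : 0 < ε := lt_min (by positivity) (by positivity)
  have hεgmax : ε * gmax ≤ σ * c / 2 := by
    have h1 : ε ≤ σ * c / (2 * gmax) := min_le_left _ _
    have h2 : ε * gmax ≤ (σ * c / (2 * gmax)) * gmax :=
      mul_le_mul_of_nonneg_right h1 hgmax0.le
    have h3 : (σ * c / (2 * gmax)) * gmax = σ * c / 2 := by
      field_simp
    linarith only [h2, h3]
  have hεgmax4 : 4 * (ε * gmax) ≤ 1 := by
    have h1 : ε ≤ 1 / (4 * gmax) := min_le_right _ _
    have h2 : ε * gmax ≤ (1 / (4 * gmax)) * gmax :=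
      mul_le_mul_of_nonneg_right h1 hgmax0.le
    have h3 : (1 / (4 * gmax)) * gmax = 1 / 4 := by
      field_simp
    linarith only [h2, h3]
  set R : ℝ := Real.sqrt (W / ε) with hRdef
  have hR0 : 0 ≤ R := Real.sqrt_nonneg _
  have hR2 : R ^ 2 = W / ε := Real.sq_sqrt (by positivity)
  have hεR : ε * (1 + R ^ 2) = ε + W := by
    rw [hR2]
    field_simp
  set φ : ℝ → ℝ := fun t => c * Real.exp (a * (t - t₀)) with hφdef
  set g : ℝ → ℝ := fun t => Real.exp (B * (t - T)) with hgdef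
  have hφd : ∀ t, HasDerivAt φ (a * φ t) t := by
    intro t
    have h1 : HasDerivAt (fun t : ℝ => a * (t - t₀)) a t := by
      simpa using ((hasDerivAt_id t).sub_const t₀).const_mul a
    have h2 := (h1.exp).const_mul c
    have e : a * φ t = c * (Real.exp (a * (t - t₀)) * a) := by simp only [hφdef]; ring
    rw [e]; exact h2
  have hgd : ∀ t, HasDerivAt g (B * g t) t := by
    intro t
    have h1 : HasDerivAt (fun t : ℝ => B * (t - T)) B t := by
      simpa using ((hasDerivAt_id t).sub_const T).const_mul B
    have h2 := h1.exp
    convert h2 using 1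
    simp only [hgdef]
    ring
  have hgpos : ∀ t, 0 < g t := fun t => Real.exp_pos _
  have hg1 : ∀ t, T ≤ t → 1 ≤ g t := by
    intro t ht
    rw [hgdef]
    apply Real.one_le_exp
    have : 0 ≤ t - T := by linarith only [ht]
    positivity
  have hgle : ∀ t ≤ t₀, g t ≤ gmax := by
    intro t ht
    rw [hgdef, hgmaxdef]
    apply Real.exp_le_exp.2
    have h5 : t - T ≤ t₀ - T := by linarith only [ht]
    exact mul_le_mul_of_nonneg_left h5 hB0.le
  have hφt₀ : φ t₀ = c := by simp [hφdef]
  have hgt₀ : g t₀ = gmax := by rw [hgdef, hgmaxdef]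
  have hσφ : ∀ t ≤ t₀, σ * c ≤ σ * φ t := by
    intro t ht
    have h1 : 1 ≤ Real.exp (a * (t - t₀)) := by
      apply Real.one_le_exp
      have h0 : t - t₀ ≤ 0 := by linarith only [ht]
      nlinarith only [ha, h0]
    have h2 : σ * φ t = (σ * c) * Real.exp (a * (t - t₀)) := by
      simp only [hφdef]; ring
    rw [h2]
    have h6 : 0 ≤ (σ * c) * (Real.exp (a * (t - t₀)) - 1) :=
      mul_nonneg hσc.le (by linarith only [h1])
    linarith only [h6, hσc]
  have hφT : W + 1 ≤ σ * φ T := by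
    have h1 : X + 1 ≤ Real.exp X := by linarith [Real.add_one_le_exp X]
    have h2 : σ * φ T = (σ * c) * Real.exp (a * (T - t₀)) := by
      simp only [hφdef]; ring
    have h4 : (σ * c) * X = W + 1 := by
      rw [hXdef]; field_simp
      exact div_self hσc.ne'
    rw [h2, haT]
    have h6 := mul_le_mul_of_nonneg_left h1 hσc.le
    have h7 : (σ * c) * (X + 1) = W + 1 + σ * c := by linear_combination h4
    linarith only [h6, h7, hσc]
  -- the auxiliary function and its max over the parabolic cylinder
  set Q : EuclideanSpace ℝ (Fin n) → ℝ := fun z => ∑ i, (z i - x₀ i) * (z i - x₀ i) with hQdef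
  have hQ0 : ∀ z, 0 ≤ Q z := fun z => q_nonneg' x₀ z
  set F : EuclideanSpace ℝ (Fin n) × ℝ → ℝ :=
    fun p => σ * (Real.log (u p.1 p.2) - φ p.2) - ε * g p.2 * (1 + Q p.1) with hFdef
  set Kc : Set (EuclideanSpace ℝ (Fin n) × ℝ) := closedBall x₀ R ×ˢ Icc T t₀ with hKcdef
  have hKcsub : Kc ⊆ univ ×ˢ Iic (0:ℝ) := by
    rintro ⟨x, t⟩ ⟨hx, ht⟩
    exact ⟨trivial, le_trans ht.2 ht₀.le⟩
  have hKccomp : IsCompact Kc := (isCompact_closedBall x₀ R).prod isCompact_Icc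
  have hKcne : ((x₀, t₀) : EuclideanSpace ℝ (Fin n) × ℝ) ∈ Kc :=
    ⟨mem_closedBall_self hR0, ⟨hTlt.le, le_refl t₀⟩⟩
  have hFcont : ContinuousOn F Kc := by
    have hucont : ContinuousOn (fun p : EuclideanSpace ℝ (Fin n) × ℝ => u p.1 p.2) Kc :=
      (hu.continuousOn).mono hKcsub
    have hlogc : ContinuousOn (fun p : EuclideanSpace ℝ (Fin n) × ℝ => Real.log (u p.1 p.2)) Kc :=
      hucont.log (fun p hp => (hupos p.1 p.2 (hKcsub hp).2).ne')
    have hφc : Continuous φ := by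
      rw [hφdef]; fun_prop
    have hgc : Continuous g := by
      rw [hgdef]; fun_prop
    have hQc : Continuous Q := by
      rw [hQdef]; exact q_cont' x₀
    exact (continuousOn_const.mul (hlogc.sub ((hφc.comp continuous_snd).continuousOn))).sub
      ((continuousOn_const.mul ((hgc.comp continuous_snd).continuousOn)).mul
        (continuousOn_const.add ((hQc.comp continuous_fst).continuousOn)))
  obtain ⟨⟨x₁, t₁⟩, hmem, hmax⟩ := hKccomp.exists_isMaxOn ⟨(x₀, t₀), hKcne⟩ hFcont
  have hmemx : x₁ ∈ closedBall x₀ R := hmem.1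
  have hmemt : t₁ ∈ Icc T t₀ := hmem.2
  have ht₁0 : t₁ < 0 := lt_of_le_of_lt hmemt.2 ht₀
  have ht₁le : t₁ ≤ (0:ℝ) := ht₁0.le
  have hmax' : ∀ p ∈ Kc, F p ≤ F (x₁, t₁) := fun p hp => hmax hp
  have hQx₀ : Q x₀ = 0 := by simp [hQdef]
  have hL2c : Real.log (u x₀ t₀) = 2 * c := by rw [hcdef]; ring
  have hF₀ : σ * c / 2 ≤ F (x₀, t₀) := by
    have e1 : F (x₀, t₀) = σ * c - ε * gmax := by
      simp only [hFdef]
      rw [hφt₀, hQx₀, hgt₀, hL2c]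
      ring
    rw [e1]; linarith only [hεgmax, hσc]
  have hFmaxval : σ * c / 2 ≤ F (x₁, t₁) := le_trans hF₀ (hmax' (x₀, t₀) hKcne)
  have hx₁R : dist x₁ x₀ < R := by
    rcases lt_or_eq_of_le (mem_closedBall.1 hmemx) with h | h
    · exact h
    · exfalso
      have hQx₁ : Q x₁ = R ^ 2 := by
        have h9 : Q x₁ = ‖x₁ - x₀‖ ^ 2 := q_eq_norm' x₀ x₁
        rw [h9, ← dist_eq_norm, h]
      have hlog1 : σ * Real.log (u x₁ t₁) ≤ W := hlogbd x₁ t₁ ht₁le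
      have hφ1 : σ * c ≤ σ * φ t₁ := hσφ t₁ hmemt.2
      have hg1' : 1 ≤ g t₁ := hg1 t₁ hmemt.1
      have hεg : ε + W ≤ ε * g t₁ * (1 + Q x₁) := by
        rw [hQx₁]
        have h5 : 0 ≤ ε * (1 + R ^ 2) := by positivity
        have h6 := le_mul_of_one_le_right h5 hg1'
        have h7 : ε * (1 + R ^ 2) * g t₁ = ε * g t₁ * (1 + R ^ 2) := by ring
        linarith only [h6, h7, hεR]
      have e1 : F (x₁, t₁) = σ * Real.log (u x₁ t₁) - σ * φ t₁ - ε * g t₁ * (1 + Q x₁) := by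
        simp only [hFdef]; ring
      rw [e1] at hFmaxval
      linarith only [hFmaxval, hεg, hlog1, hφ1, hσc, hε0]
  have hT₁ : T < t₁ := by
    rcases lt_or_eq_of_le hmemt.1 with h | h
    · exact h
    · exfalso
      have hlog1 : σ * Real.log (u x₁ t₁) ≤ W := hlogbd x₁ t₁ ht₁le
      have hεg : 0 ≤ ε * g t₁ * (1 + Q x₁) := by
        have := hQ0 x₁
        have := (hgpos t₁).le
        positivity
      have e1 : F (x₁, t₁) = σ * Real.log (u x₁ t₁) - σ * φ t₁ - ε * g t₁ * (1 + Q x₁) := by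
        simp only [hFdef]; ring
      have hφT1 : W + 1 ≤ σ * φ t₁ := by rw [h] at hφT; exact hφT
      rw [e1] at hFmaxval
      linarith only [hFmaxval, hlog1, hφT1, hεg, hσc]
  -- smoothness at time t₁ < 0
  have hCp : ∀ (x : EuclideanSpace ℝ (Fin n)) (t : ℝ), t < 0 →
      ContDiffAt ℝ 2 (fun p : EuclideanSpace ℝ (Fin n) × ℝ => u p.1 p.2) (x, t) := by
    intro x t ht
    exact (hu.contDiffAt (prod_mem_nhds univ_mem (Iic_mem_nhds ht))).of_le (WithTop.coe_le_coe.2 (le_top : (2:ℕ∞) ≤ ⊤))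
  have hCU : ∀ y, ContDiffAt ℝ 2 (fun y => u y t₁) y := by
    intro y
    exact (hCp y t₁ ht₁0).comp y ((contDiff_prodMk_left t₁).contDiffAt)
  have hCt : ContDiffAt ℝ 2 (fun s : ℝ => u x₁ s) t₁ := by
    have h1 : ContDiff ℝ 2 (fun s : ℝ => ((x₁, s) : EuclideanSpace ℝ (Fin n) × ℝ)) :=
      contDiff_const.prodMk contDiff_id
    exact (hCp x₁ t₁ ht₁0).comp t₁ h1.contDiffAt
  set P : ℝ := u x₁ t₁ with hPdef
  have hP : 0 < P := hupos x₁ t₁ ht₁le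
  have hPinv : P * P⁻¹ = 1 := mul_inv_cancel₀ hP.ne'
  set d : ℝ := deriv (fun s => u x₁ s) t₁ with hddef
  have hud : HasDerivAt (fun s => u x₁ s) d t₁ := (hCt.differentiableAt two_ne_zero).hasDerivAt
  set μ1 : ℝ := ε * g t₁ with hμ1def
  have hμ1pos : 0 < μ1 := mul_pos hε0 (hgpos t₁)
  have hμ14 : 4 * μ1 ≤ 1 := by
    have h1 : g t₁ ≤ gmax := hgle t₁ hmemt.2
    have : μ1 ≤ ε * gmax := by
      rw [hμ1def]
      exact mul_le_mul_of_nonneg_left h1 hε0.le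
    linarith only [this, hεgmax4]
  -- time derivative test
  have htime : 0 ≤ σ * (P⁻¹ * d - a * φ t₁) - ε * (B * g t₁) * (1 + Q x₁) := by
    apply right_endpoint_deriv_nonneg' hT₁ (φ := fun t => F (x₁, t))
    · have hlogd : HasDerivAt (fun s => Real.log (u x₁ s)) (P⁻¹ * d) t₁ :=
        (Real.hasDerivAt_log hP.ne').comp t₁ hud
      have h1 : HasDerivAt (fun s => σ * (Real.log (u x₁ s) - φ s))
          (σ * (P⁻¹ * d - a * φ t₁)) t₁ := (hlogd.sub (hφd t₁)).const_mul σ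
      have h2 : HasDerivAt (fun s => ε * g s * (1 + Q x₁))
          (ε * (B * g t₁) * (1 + Q x₁)) t₁ := ((hgd t₁).const_mul ε).mul_const (1 + Q x₁)
      exact h1.sub h2
    · intro t ht
      have h3 : ((x₁, t) : EuclideanSpace ℝ (Fin n) × ℝ) ∈ Kc :=
        ⟨hmemx, ⟨ht.1, le_trans ht.2 hmemt.2⟩⟩
      exact hmax' (x₁, t) h3
  -- spatial test
  have hloc : IsLocalMax (fun z => σ * (Real.log ((fun y => u y t₁) z) - φ t₁)
      - μ1 * (1 + ∑ i, (z i - x₀ i) * (z i - x₀ i))) x₁ := by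
    have hball : ball x₀ R ∈ nhds x₁ := isOpen_ball.mem_nhds (mem_ball.2 hx₁R)
    refine Filter.eventually_of_mem hball ?_
    intro z hz
    have h3 : ((z, t₁) : EuclideanSpace ℝ (Fin n) × ℝ) ∈ Kc :=
      ⟨ball_subset_closedBall hz, hmemt⟩
    exact hmax' (z, t₁) h3
  obtain ⟨hc1, hc2⟩ := spatial_max_info' hCU (fun y => hupos y t₁ ht₁le) hσ2 hμ1pos hloc
  -- the PDE at the maximum point
  have hPDE : d = eLap (fun y => u y t₁) x₁
      - ⟪gradient f x₁, gradient (fun y => u y t₁) x₁⟫ + a * P * Real.log P := by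
    have := heq x₁ t₁ ht₁le
    rw [fLap] at this
    exact this
  have hgradU : ⟪gradient f x₁, gradient (fun y => u y t₁) x₁⟫
      = σ * P * μ1 * (2 * ⟪x₁ - x₀, gradient f x₁⟫) := by
    rw [real_inner_comm, grad_inner' (fun y => u y t₁) x₁ (gradient f x₁)]
    exact hc1 (gradient f x₁)
  -- convexity bound on the drift term
  set r : ℝ := ‖x₁ - x₀‖ with hrdef
  set ip : ℝ := ⟪x₁ - x₀, gradient f x₁⟫ with hipdef
  have hip : -(K * r) ≤ ip := by
    have h1 := grad_mono' hf hconv x₀ x₁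
    have h2 : |⟪gradient f x₀, x₁ - x₀⟫| ≤ K * r := by
      rw [hKdef, hrdef]
      exact abs_real_inner_le_norm (gradient f x₀) (x₁ - x₀)
    have h3 : ip = ⟪gradient f x₁, x₁ - x₀⟫ := by
      rw [hipdef, real_inner_comm]
    rw [h3]
    have h4 := neg_abs_le ⟪gradient f x₀, x₁ - x₀⟫
    linarith only [h1, h2, h4]
  have hrQ : r * r = Q x₁ := by
    have h9 : Q x₁ = ‖x₁ - x₀‖ ^ 2 := q_eq_norm' x₀ x₁
    rw [h9, hrdef]
    ring
  have hr0 : 0 ≤ r := norm_nonneg _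
  have h2Kr : 2 * (K * r) ≤ K ^ 2 + Q x₁ := by nlinarith only [sq_nonneg (K - r), hrQ]
  -- strict inequality from positivity of the max
  have hwφ : a * (σ * Real.log P) < a * (σ * φ t₁) := by
    have h1 : 0 < ε * g t₁ * (1 + Q x₁) := by
      have := hQ0 x₁
      have := hgpos t₁
      positivity
    have e1 : F (x₁, t₁) = σ * (Real.log P - φ t₁) - ε * g t₁ * (1 + Q x₁) := by
      simp only [hFdef, hPdef]
    have h2 : 0 < σ * (Real.log P - φ t₁) := by
      rw [e1] at hFmaxval
      linarith only [hFmaxval, h1, hσc]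
    have h2' : σ * φ t₁ < σ * Real.log P := by nlinarith only [h2]
    exact mul_lt_mul_of_neg_left h2' ha
  -- assemble the contradiction
  have hμ1B : ε * (B * g t₁) * (1 + Q x₁) = μ1 * B * (1 + Q x₁) := by
    rw [hμ1def]; ring
  set eL : ℝ := eLap (fun y => u y t₁) x₁ with heLdef
  set Lg : ℝ := Real.log P with hLgdef
  have hc2' : σ * (P⁻¹ * eL) ≤ σ * (4 * μ1 ^ 2 * Q x₁) + 2 * n * μ1 := hc2
  clear_value W c K B X T gmax ε R φ g Q F Kc P d μ1 eL Lg r ip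
  have step1 : σ * (P⁻¹ * d) = σ * (P⁻¹ * eL) - μ1 * (2 * ip) + a * (σ * Lg) := by
    have hd2 : d = eL - σ * P * μ1 * (2 * ip) + a * P * Lg := by
      rw [hPDE, hgradU]
    rw [hd2]
    linear_combination (-(μ1 * (2 * ip) * (P * P⁻¹))) * hσ2
      + (σ * (a * Lg) - μ1 * (2 * ip)) * hPinv
  have step2 : σ * (4 * μ1 ^ 2 * Q x₁) ≤ 4 * μ1 ^ 2 * Q x₁ := by
    have h5 : 0 ≤ (1 - σ) * (μ1 ^ 2 * Q x₁) :=
      mul_nonneg (by linarith only [hσ1]) (mul_nonneg (sq_nonneg μ1) (hQ0 x₁))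
    nlinarith only [h5]
  have step3 : σ * (P⁻¹ * d) < 4 * μ1 ^ 2 * Q x₁ + 2 * n * μ1 + μ1 * (2 * (K * r))
      + a * (σ * φ t₁) := by
    have h1 : - (μ1 * (2 * ip)) ≤ μ1 * (2 * (K * r)) := by
      have h := mul_le_mul_of_nonneg_left hip hμ1pos.le
      nlinarith only [h]
    rw [step1]
    have h2 : σ * (P⁻¹ * eL) ≤ 4 * μ1 ^ 2 * Q x₁ + 2 * n * μ1 :=
      le_trans hc2' (by linarith only [step2])
    linarith only [h1, h2, hwφ]
  have step4 : a * (σ * φ t₁) + μ1 * B * (1 + Q x₁) ≤ σ * (P⁻¹ * d) := by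
    have h2 : σ * (P⁻¹ * d - a * φ t₁) = σ * (P⁻¹ * d) - a * (σ * φ t₁) := by ring
    linarith only [htime, hμ1B, h2]
  have step5 : μ1 * B * (1 + Q x₁) < 4 * μ1 ^ 2 * Q x₁ + 2 * n * μ1 + μ1 * (2 * (K * r)) := by
    linarith only [step3, step4]
  have hn0 : (0:ℝ) ≤ (n:ℝ) := Nat.cast_nonneg n
  have e6 : μ1 * (2 * (K * r)) ≤ μ1 * (K ^ 2 + Q x₁) :=
    mul_le_mul_of_nonneg_left h2Kr hμ1pos.le
  have e7 : 4 * μ1 ^ 2 * Q x₁ ≤ μ1 * Q x₁ := by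
    have h := mul_le_mul_of_nonneg_right hμ14 (mul_nonneg hμ1pos.le (hQ0 x₁))
    nlinarith only [h]
  have e9 : μ1 * Q x₁ + 2 * n * μ1 + μ1 * (K ^ 2 + Q x₁) ≤ μ1 * (B - 1) * (1 + Q x₁) := by
    have h1 : 0 ≤ μ1 * ((n:ℝ) * Q x₁) :=
      mul_nonneg hμ1pos.le (mul_nonneg hn0 (hQ0 x₁))
    have h2 : 0 ≤ μ1 * (K ^ 2 * Q x₁) :=
      mul_nonneg hμ1pos.le (mul_nonneg (sq_nonneg K) (hQ0 x₁))
    rw [hBdef]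
    nlinarith only [h1, h2, hμ1pos]
  have e10 : μ1 * B * (1 + Q x₁) < μ1 * (B - 1) * (1 + Q x₁) := by
    linarith only [step5, e6, e7, e9]
  have hposQ : 0 < μ1 * (1 + Q x₁) :=
    mul_pos hμ1pos (by linarith only [hQ0 x₁])
  linarith only [e10, hposQ]

end KeyComp

open Filter in
/-- Rigidity of positive ancient solutions of the nonlinear `f`-heat equation pinched
between `e^{-2}` and `D`, for `a < 0` (Euclidean case of Theorem 1.2(ii)). -/
theorem ancient_solution_neg_rigidity (n : ℕ) (hn : 1 ≤ n) (a : ℝ) (ha : a < 0)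
    (f : EuclideanSpace ℝ (Fin n) → ℝ) (hf : ContDiff ℝ (⊤ : ℕ∞) f)
    (hconv : ∀ x v : EuclideanSpace ℝ (Fin n), 0 ≤ hessQF f x v)
    (D : ℝ) (u : EuclideanSpace ℝ (Fin n) → ℝ → ℝ)
    (hu : ContDiffOn ℝ (⊤ : ℕ∞) (fun p : EuclideanSpace ℝ (Fin n) × ℝ => u p.1 p.2)
      (univ ×ˢ Iic (0 : ℝ)))
    (hbd : ∀ (x : EuclideanSpace ℝ (Fin n)), ∀ t ≤ (0 : ℝ),
      Real.exp (-2) ≤ u x t ∧ u x t ≤ D)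
    (heq : ∀ (x : EuclideanSpace ℝ (Fin n)), ∀ t ≤ (0 : ℝ),
      deriv (fun s => u x s) t
        = fLap f (fun y => u y t) x + a * u x t * Real.log (u x t)) :
    1 ≤ D ∧ ∀ (x : EuclideanSpace ℝ (Fin n)), ∀ t ≤ (0 : ℝ), u x t = 1 := by
  have hneg : ∀ x, ∀ t < (0:ℝ), u x t = 1 := by
    intro x t ht
    have h1 := key_comp' ha hf hconv hu hbd heq (Or.inl rfl : (1:ℝ) = 1 ∨ (1:ℝ) = -1) x ht
    have h2 := key_comp' ha hf hconv hu hbd heq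
      (Or.inr rfl : (-1:ℝ) = 1 ∨ (-1:ℝ) = -1) x ht
    have hpos : 0 < u x t := lt_of_lt_of_le (Real.exp_pos _) (hbd x t ht.le).1
    have hlog : Real.log (u x t) = 0 := by linarith only [h1, h2]
    have h3 := Real.exp_log hpos
    rw [hlog, Real.exp_zero] at h3
    exact h3.symm
  have hzero : ∀ x, u x 0 = 1 := by
    intro x
    have h1 : ContinuousOn (fun p : EuclideanSpace ℝ (Fin n) × ℝ => u p.1 p.2)
        (univ ×ˢ Iic (0:ℝ)) := hu.continuousOn
    have hcont : ContinuousWithinAt (fun t => u x t) (Iic (0:ℝ)) 0 := by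
      have h3 := h1 (x, (0:ℝ)) ⟨trivial, mem_Iic.2 le_rfl⟩
      have h4 : ContinuousWithinAt (fun t : ℝ => ((x, t) : EuclideanSpace ℝ (Fin n) × ℝ))
          (Iic (0:ℝ)) 0 :=
        (Continuous.continuousWithinAt (by continuity))
      exact h3.comp h4 (fun s hs => ⟨trivial, hs⟩)
    have hlim : Tendsto (fun t => u x t) (nhdsWithin 0 (Iio (0:ℝ))) (nhds (u x 0)) :=
      hcont.tendsto.mono_left (nhdsWithin_mono _ Iio_subset_Iic_self)
    have hev : (fun t => u x t) =ᶠ[nhdsWithin (0:ℝ) (Iio 0)] (fun _ => (1:ℝ)) := by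
      filter_upwards [self_mem_nhdsWithin] with t ht
      exact hneg x t ht
    have hlim2 : Tendsto (fun t => u x t) (nhdsWithin (0:ℝ) (Iio 0)) (nhds 1) :=
      Tendsto.congr' hev.symm tendsto_const_nhds
    exact tendsto_nhds_unique hlim hlim2
  have hall : ∀ (x : EuclideanSpace ℝ (Fin n)), ∀ t ≤ (0 : ℝ), u x t = 1 := by
    intro x t ht
    rcases lt_or_eq_of_le ht with h | h
    · exact hneg x t h
    · rw [h]; exact hzero x
  refine ⟨?_, hall⟩
  have h5 := (hbd 0 0 le_rfl).2
  rw [hall 0 0 le_rfl] at h5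
  exact h5
end
end
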